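/- arXiv:1710.06070 — 2 statements merged into one kernel-verified Lean document; each statement's English description precedes it below -/
import Mathlib

section
/- Under the unmatched-disturbance structural assumption, the vector field ẇ = (J_cl − R_cl)∇H_cl(w) − (0, (J_au+R_au)^T d̄_u, 0) equals (J_cl − R_cl)∇𝐇_cl(w) − ((J_c1−R_c1) d̄_u, 0, (J_c1−R_c1) d̄_u), where 𝐇_cl(w) = H_cl(w) + w_a^T d̄_u, provided R_c2 = 0. -/
/-!
Shifting the gradient by `(d̄_u, 0, 0)` adds to `(J_cl − R_cl)∇H_cl` the first block column of
`J_cl − R_cl` applied to `d̄_u`. Because `R_c2 = 0`, that column is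
`(J_c1 − R_c1, −(J_au + R_au)ᵀ, J_c1 − R_c1)`: its outer blocks are cancelled by the correction
on the right, and its middle block is the disturbance term on the left.
-/

open Matrix

def blockVec {m s : ℕ} (a : Fin m → ℝ) (b : Fin s → ℝ) (c : Fin m → ℝ) :
    (Fin m ⊕ (Fin s ⊕ Fin m)) → ℝ := Sum.elim a (Sum.elim b c)

noncomputable def Jcl {m s : ℕ} (Jc1 : Matrix (Fin m) (Fin m) ℝ)
    (Juu : Matrix (Fin s) (Fin s) ℝ) (Jau Rau : Matrix (Fin m) (Fin s) ℝ) :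
    Matrix (Fin m ⊕ (Fin s ⊕ Fin m)) (Fin m ⊕ (Fin s ⊕ Fin m)) ℝ :=
  fromBlocks Jc1 (fromCols (Jau + Rau) Jc1)
    (fromRows (-(Jau + Rau)ᵀ) Jc1) (fromBlocks Juu 0 0 Jc1)

/-- `R_cl` with `R_c2 = 0`. -/
noncomputable def Rcl0 {m s : ℕ} (Rc1 : Matrix (Fin m) (Fin m) ℝ)
    (Ruu : Matrix (Fin s) (Fin s) ℝ) :
    Matrix (Fin m ⊕ (Fin s ⊕ Fin m)) (Fin m ⊕ (Fin s ⊕ Fin m)) ℝ :=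
  fromBlocks Rc1 (fromCols 0 Rc1) (fromRows 0 Rc1) (fromBlocks Ruu 0 0 Rc1)

section BlockVec

variable {m s : ℕ}

theorem blockVec_add (a a' : Fin m → ℝ) (b b' : Fin s → ℝ) (c c' : Fin m → ℝ) :
    blockVec (a + a') (b + b') (c + c') = blockVec a b c + blockVec a' b' c' := by
  simp only [blockVec, Sum.elim_add_add]

theorem blockVec_sub (a a' : Fin m → ℝ) (b b' : Fin s → ℝ) (c c' : Fin m → ℝ) :
    blockVec (a - a') (b - b') (c - c') = blockVec a b c - blockVec a' b' c' := by
  simp only [blockVec, Sum.elim_sub_sub]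

theorem blockVec_neg (a : Fin m → ℝ) (b : Fin s → ℝ) (c : Fin m → ℝ) :
    blockVec (-a) (-b) (-c) = -blockVec a b c := by
  simp only [blockVec, Sum.elim_neg_neg]

theorem blockVec_add_left (a d : Fin m → ℝ) (b : Fin s → ℝ) (c : Fin m → ℝ) :
    blockVec (a + d) b c = blockVec a b c + blockVec d 0 0 := by
  simpa using blockVec_add a d b 0 c 0

end BlockVec

section ClosedLoop

variable {m s : ℕ} (Jc1 Rc1 : Matrix (Fin m) (Fin m) ℝ) (Juu Ruu : Matrix (Fin s) (Fin s) ℝ)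
  (Jau Rau : Matrix (Fin m) (Fin s) ℝ) (d : Fin m → ℝ)

theorem Jcl_mulVec_blockVec_left :
    Jcl Jc1 Juu Jau Rau *ᵥ blockVec d 0 0 =
      blockVec (Jc1 *ᵥ d) (-(Jau + Rau)ᵀ *ᵥ d) (Jc1 *ᵥ d) := by
  simp only [Jcl, blockVec, fromBlocks_mulVec, fromRows_mulVec, Sum.elim_comp_inl,
    Sum.elim_comp_inr, Sum.elim_zero_zero, mulVec_zero, add_zero]

theorem Rcl0_mulVec_blockVec_left :
    Rcl0 Rc1 Ruu *ᵥ blockVec d 0 0 = blockVec (Rc1 *ᵥ d) 0 (Rc1 *ᵥ d) := by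
  simp only [Rcl0, blockVec, fromBlocks_mulVec, fromRows_mulVec, Sum.elim_comp_inl,
    Sum.elim_comp_inr, Sum.elim_zero_zero, mulVec_zero, zero_mulVec, add_zero]

end ClosedLoop

theorem stmt12_general {m s : ℕ} (Jc1 Rc1 K : Matrix (Fin m) (Fin m) ℝ)
    (Juu Ruu : Matrix (Fin s) (Fin s) ℝ) (Jau Rau : Matrix (Fin m) (Fin s) ℝ)
    (du : Fin m → ℝ) :
    ∀ (a : Fin m → ℝ) (b : Fin s → ℝ) (wc : Fin m → ℝ),
      (Jcl Jc1 Juu Jau Rau - Rcl0 Rc1 Ruu).mulVec (blockVec a b (K.mulVec wc))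
          - blockVec 0 ((Jau + Rau)ᵀ.mulVec du) 0 =
        (Jcl Jc1 Juu Jau Rau - Rcl0 Rc1 Ruu).mulVec
            (blockVec (a + du) b (K.mulVec wc))
          - blockVec ((Jc1 - Rc1).mulVec du) 0 ((Jc1 - Rc1).mulVec du) := by
  intro a b wc
  have shift : (Jcl Jc1 Juu Jau Rau - Rcl0 Rc1 Ruu) *ᵥ blockVec du 0 0 =
      blockVec ((Jc1 - Rc1) *ᵥ du) (-(Jau + Rau)ᵀ *ᵥ du) ((Jc1 - Rc1) *ᵥ du) := by
    rw [sub_mulVec, Jcl_mulVec_blockVec_left, Rcl0_mulVec_blockVec_left, ← blockVec_sub,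
      sub_zero, sub_mulVec]
  rw [blockVec_add_left, mulVec_add, shift, add_sub_assoc, ← blockVec_sub, sub_self, sub_zero,
    neg_mulVec, sub_eq_add_neg (_ *ᵥ _), ← blockVec_neg, neg_zero]

/-- with `R_c2 = 0`, the vector field
`(J_cl − R_cl)∇H_cl(w) − (0, (J_au+R_au)ᵀ d̄_u, 0)` equals
`(J_cl − R_cl)∇𝐇_cl(w) − ((J_c1−R_c1) d̄_u, 0, (J_c1−R_c1) d̄_u)`, where
`∇𝐇_cl = ∇H_cl + (d̄_u, 0, 0)`.  Here `a, b, K w_c` are the blocks of `∇H_cl`. -/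
theorem stmt12 {m s : ℕ} (Jc1 Rc1 K : Matrix (Fin m) (Fin m) ℝ)
    (Juu Ruu : Matrix (Fin s) (Fin s) ℝ) (Jau Rau : Matrix (Fin m) (Fin s) ℝ)
    (hJc1 : Jc1ᵀ = -Jc1) (hRc1 : Rc1ᵀ = Rc1) (hJuu : Juuᵀ = -Juu)
    (hRuu : Ruuᵀ = Ruu) (du : Fin m → ℝ) :
    ∀ (a : Fin m → ℝ) (b : Fin s → ℝ) (wc : Fin m → ℝ),
      (Jcl Jc1 Juu Jau Rau - Rcl0 Rc1 Ruu).mulVec (blockVec a b (K.mulVec wc))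
          - blockVec 0 ((Jau + Rau)ᵀ.mulVec du) 0 =
        (Jcl Jc1 Juu Jau Rau - Rcl0 Rc1 Ruu).mulVec
            (blockVec (a + du) b (K.mulVec wc))
          - blockVec ((Jc1 - Rc1).mulVec du) 0 ((Jc1 - Rc1).mulVec du) :=
  stmt12_general Jc1 Rc1 K Juu Ruu Jau Rau du
end

section
/- For the unmatched-disturbance closed loop with R_c2 = 0, the shifted Hamiltonian 𝐖(w) = 𝐇_cl(w) − d̄_u^T(w_c − w̄_c) − 𝐇_cl(w̄) satisfies along trajectories the bound 𝐖̇(w) ≤ −‖∇_{w_a}𝐇_cl(w) + K(w_c − w̄_c)‖²_{R_c1} ≤ 0 for all w, where w̄_c = K^{-1} d̄_u. -/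
open Matrix

/-!
With `∇𝐇_cl = (a, b, c)` and `∇𝐖 = (a, b, c - d̄_u)`, the disturbance term `(J_c1 - R_c1) d̄_u`
recombines the `c`-block of the flow into `(J_c1 - R_c1)(a + c - d̄_u)`, so the power
`∇𝐖ᵀ F` is a quadratic form in `v = a + c - d̄_u` and `b`. The skew blocks `J_c1`, `J_uu` and
the antisymmetric coupling `±(J_au + R_au)` contribute nothing, leaving the exact balance
`∇𝐖ᵀ F = -vᵀ R_c1 v - bᵀ R_uu b`. Finally `K (w_c - K⁻¹ d̄_u) = K w_c - d̄_u` identifies `v`.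
-/

theorem Matrix.dotProduct_mulVec_self_eq_zero_of_transpose_eq_neg {n R : Type*} [Fintype n]
    [CommRing R] [NoZeroDivisors R] [CharZero R] {J : Matrix n n R} (hJ : Jᵀ = -J)
    (x : n → R) : x ⬝ᵥ J *ᵥ x = 0 := by
  rw [← CharZero.eq_neg_self_iff]
  calc x ⬝ᵥ J *ᵥ x = Jᵀ *ᵥ x ⬝ᵥ x := by rw [dotProduct_mulVec, mulVec_transpose]
    _ = -(x ⬝ᵥ J *ᵥ x) := by rw [hJ, neg_mulVec, neg_dotProduct, dotProduct_comm]

theorem blockVec_dotProduct_closedLoop_eq {m s : ℕ} {Jc1 Rc1 : Matrix (Fin m) (Fin m) ℝ}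
    {Juu Ruu : Matrix (Fin s) (Fin s) ℝ} (Jau Rau : Matrix (Fin m) (Fin s) ℝ)
    (hJc1 : Jc1ᵀ = -Jc1) (hJuu : Juuᵀ = -Juu) (a : Fin m → ℝ) (b : Fin s → ℝ)
    (c d : Fin m → ℝ) :
    blockVec a b (c - d) ⬝ᵥ ((Jcl Jc1 Juu Jau Rau - Rcl0 Rc1 Ruu) *ᵥ blockVec a b c
        - blockVec ((Jc1 - Rc1) *ᵥ d) 0 ((Jc1 - Rc1) *ᵥ d)) =
      -((a + (c - d)) ⬝ᵥ Rc1 *ᵥ (a + (c - d))) - b ⬝ᵥ Ruu *ᵥ b := by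
  set v := a + (c - d)
  set N := Jau + Rau with hN
  have hcoupling : a ⬝ᵥ N *ᵥ b = b ⬝ᵥ Nᵀ *ᵥ a := by
    rw [dotProduct_mulVec, ← mulVec_transpose, dotProduct_comm]
  have expand : blockVec a b (c - d) ⬝ᵥ ((Jcl Jc1 Juu Jau Rau - Rcl0 Rc1 Ruu) *ᵥ blockVec a b c
        - blockVec ((Jc1 - Rc1) *ᵥ d) 0 ((Jc1 - Rc1) *ᵥ d)) =
      v ⬝ᵥ Jc1 *ᵥ v - v ⬝ᵥ Rc1 *ᵥ v + b ⬝ᵥ Juu *ᵥ b - b ⬝ᵥ Ruu *ᵥ b := by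
    simp only [v, blockVec, Jcl, Rcl0, ← hN, sub_mulVec, fromBlocks_mulVec,
      fromCols_mulVec_sumElim, fromRows_mulVec, Sum.elim_comp_inl, Sum.elim_comp_inr,
      zero_mulVec, neg_mulVec, mulVec_add, mulVec_sub, Sum.elim_add_add,
      sumElim_dotProduct_sumElim, dotProduct_add, dotProduct_sub, add_dotProduct,
      sub_dotProduct, dotProduct_neg, dotProduct_zero, add_zero, zero_add]
    linear_combination hcoupling
  rw [expand, dotProduct_mulVec_self_eq_zero_of_transpose_eq_neg hJc1,
    dotProduct_mulVec_self_eq_zero_of_transpose_eq_neg hJuu]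
  ring

/-- for the unmatched-disturbance closed loop with `R_c2 = 0`,
`𝐖̇(w) = ∇𝐖(w)ᵀ F(w) ≤ −‖∇_{w_a}𝐇_cl + K(w_c − w̄_c)‖²_{R_c1} ≤ 0`, where
`a, b, K w_c` are the blocks of `∇𝐇_cl(w)`, `∇𝐖 = ∇𝐇_cl − (0,0,d̄_u)` and
`w̄_c = K⁻¹ d̄_u`. -/
theorem stmt14 {m s : ℕ} (Jc1 Rc1 K : Matrix (Fin m) (Fin m) ℝ)
    (Juu Ruu : Matrix (Fin s) (Fin s) ℝ) (Jau Rau : Matrix (Fin m) (Fin s) ℝ)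
    (hJc1 : Jc1ᵀ = -Jc1) (hRc1 : Rc1.PosDef) (hJuu : Juuᵀ = -Juu)
    (hRuu : Ruu.PosSemidef) (hK : K.PosDef)
    (Gd : Matrix (Fin m) (Fin m) ℝ) (hGd : Gd = Jc1 - Rc1) (du : Fin m → ℝ) :
    ∀ (a : Fin m → ℝ) (b : Fin s → ℝ) (wc : Fin m → ℝ),
      blockVec a b (K.mulVec wc - du) ⬝ᵥ
          ((Jcl Jc1 Juu Jau Rau - Rcl0 Rc1 Ruu).mulVec (blockVec a b (K.mulVec wc))
            - blockVec (Gd.mulVec du) 0 (Gd.mulVec du)) ≤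
        -((a + K.mulVec (wc - K⁻¹.mulVec du)) ⬝ᵥ
            Rc1.mulVec (a + K.mulVec (wc - K⁻¹.mulVec du))) ∧
      -((a + K.mulVec (wc - K⁻¹.mulVec du)) ⬝ᵥ
          Rc1.mulVec (a + K.mulVec (wc - K⁻¹.mulVec du))) ≤ 0 := by
  intro a b wc
  have hshift : K *ᵥ (wc - K⁻¹ *ᵥ du) = K *ᵥ wc - du := by
    rw [mulVec_sub, mulVec_mulVec, mul_nonsing_inv _ ((isUnit_iff_isUnit_det K).mp hK.isUnit),
      one_mulVec]
  have hRuu_nonneg : 0 ≤ b ⬝ᵥ Ruu *ᵥ b := by simpa using hRuu.dotProduct_mulVec_nonneg b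
  have hRc1_nonneg : ∀ v, 0 ≤ v ⬝ᵥ Rc1 *ᵥ v := fun v ↦ by
    simpa using hRc1.posSemidef.dotProduct_mulVec_nonneg v
  rw [hshift, hGd, blockVec_dotProduct_closedLoop_eq Jau Rau hJc1 hJuu]
  exact ⟨by linarith, by linarith [hRc1_nonneg (a + (K *ᵥ wc - du))]⟩
end
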